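/- Let β ≥ 2 be an integer, and let r, p, k, u be integers with 0 ≤ r ≤ 2^β − 1, 4 ≤ p ≤ 2^β − 1, r = kp + u and 0 ≤ u < p. Let ε₁, ε₂ be real numbers with |ε₁| ≤ 2^{1−β} and |ε₂| ≤ 2^{1−β}, and set x = (r/p)(1 + ε₁)(1 + ε₂). Then x > k − 1; in particular ⌊x⌋ ≥ k − 1. -/

import Mathlib

/-!
Bounding both rounding errors by `ε = 2^{1-β}` from below gives
`x ≥ q (1 - ε)² ≥ q - 2qε` for `q = r/p ≥ k`. Since `p ≥ 4` and `r < 2^β`, we have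
`q < 2^β / 4`, so `2qε = 4q / 2^β < 1` and hence `x > q - 1 ≥ k - 1`.
-/

lemma mul_one_sub_sq_le_mul_one_add_mul_one_add {q ε ε₁ ε₂ : ℝ} (hq : 0 ≤ q) (hε : ε ≤ 1)
    (h₁ : |ε₁| ≤ ε) (h₂ : |ε₂| ≤ ε) : q * (1 - ε) ^ 2 ≤ q * (1 + ε₁) * (1 + ε₂) := by
  obtain ⟨h₁l, -⟩ := abs_le.mp h₁
  obtain ⟨h₂l, -⟩ := abs_le.mp h₂
  rw [mul_assoc, sq]
  gcongr <;> linarith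

lemma sub_one_lt_mul_one_sub_sq {q ε : ℝ} (hq : 0 ≤ q) (h : 2 * q * ε < 1) :
    q - 1 < q * (1 - ε) ^ 2 := by
  nlinarith [mul_nonneg hq (sq_nonneg ε)]

lemma sub_one_lt_mul_one_add_mul_one_add {q ε ε₁ ε₂ : ℝ} (hq : 0 ≤ q) (hε : ε ≤ 1)
    (h₁ : |ε₁| ≤ ε) (h₂ : |ε₂| ≤ ε) (h : 2 * q * ε < 1) :
    q - 1 < q * (1 + ε₁) * (1 + ε₂) :=
  (sub_one_lt_mul_one_sub_sq hq h).trans_le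
    (mul_one_sub_sq_le_mul_one_add_mul_one_add hq hε h₁ h₂)

lemma two_zpow_one_sub_natCast (β : ℕ) : (2 : ℝ) ^ (1 - (β : ℤ)) = 2 / 2 ^ β := by
  rw [zpow_sub₀ two_ne_zero, zpow_one, zpow_natCast]

lemma two_zpow_one_sub_natCast_le_one {β : ℕ} (hβ : 1 ≤ β) : (2 : ℝ) ^ (1 - (β : ℤ)) ≤ 1 :=
  zpow_le_one_of_nonpos₀ one_le_two (by omega)

lemma two_mul_mul_two_zpow_one_sub_natCast_lt_one {β : ℕ} {q : ℝ} (hq : 4 * q < 2 ^ β) :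
    2 * q * 2 ^ (1 - (β : ℤ)) < 1 := by
  rw [two_zpow_one_sub_natCast, ← mul_div_assoc, div_lt_one (by positivity)]
  linarith

lemma intCast_div_le_of_eq_mul_add {r p k u : ℤ} (hp : 0 < p) (hru : r = k * p + u)
    (hu : 0 ≤ u) : (k : ℝ) ≤ r / p := by
  rw [le_div_iff₀ (by exact_mod_cast hp)]
  exact_mod_cast (by omega : k * p ≤ r)

lemma four_mul_intCast_div_lt_two_pow {β : ℕ} {r p : ℤ} (hr0 : 0 ≤ r) (hr1 : r ≤ 2 ^ β - 1)
    (hp : 4 ≤ p) : 4 * ((r : ℝ) / p) < 2 ^ β := by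
  have hpR : (4 : ℝ) ≤ p := by exact_mod_cast hp
  have hrR : (r : ℝ) ≤ 2 ^ β - 1 := by exact_mod_cast hr1
  calc 4 * ((r : ℝ) / p) ≤ p * (r / p) := by gcongr
    _ = r := mul_div_cancel₀ _ (by positivity)
    _ < 2 ^ β := by linarith

theorem fdiv_lower_bound_general (β : ℕ) (hβ : 2 ≤ β) (r p k u : ℤ)
    (hr0 : 0 ≤ r) (hr1 : r ≤ 2 ^ β - 1)
    (hp0 : 4 ≤ p)
    (hru : r = k * p + u) (hu0 : 0 ≤ u)
    (ε₁ ε₂ : ℝ) (hε₁ : |ε₁| ≤ 2 ^ (1 - (β : ℤ))) (hε₂ : |ε₂| ≤ 2 ^ (1 - (β : ℤ)))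
    (x : ℝ) (hx : x = ((r : ℝ) / (p : ℝ)) * (1 + ε₁) * (1 + ε₂)) :
    (k : ℝ) - 1 < x ∧ k - 1 ≤ ⌊x⌋ := by
  have hk : (k : ℝ) ≤ r / p := intCast_div_le_of_eq_mul_add (by omega) hru hu0
  have hq : (0 : ℝ) ≤ r / p := by
    have : (0 : ℝ) ≤ p := by exact_mod_cast (by omega : (0 : ℤ) ≤ p)
    positivity
  have hlt : (r : ℝ) / p - 1 < x := hx ▸
    sub_one_lt_mul_one_add_mul_one_add hq (two_zpow_one_sub_natCast_le_one (by omega)) hε₁ hε₂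
      (two_mul_mul_two_zpow_one_sub_natCast_lt_one (four_mul_intCast_div_lt_two_pow hr0 hr1 hp0))
  have hkx : (k : ℝ) - 1 < x := by linarith
  exact ⟨hkx, Int.le_floor.mpr (by push_cast; exact hkx.le)⟩

/-- Floating point division never undershoots by more than one unit: with
`r = kp + u`, `0 ≤ u < p`, `p ≥ 4`, and relative rounding errors
`|ε₁|, |ε₂| ≤ 2^{1−β}`, the computed value `x = (r/p)(1+ε₁)(1+ε₂)` satisfies
`x > k − 1`, hence `⌊x⌋ ≥ k − 1`. -/
theorem fdiv_lower_bound (β : ℕ) (hβ : 2 ≤ β) (r p k u : ℤ)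
    (hr0 : 0 ≤ r) (hr1 : r ≤ 2 ^ β - 1)
    (hp0 : 4 ≤ p) (hp1 : p ≤ 2 ^ β - 1)
    (hru : r = k * p + u) (hu0 : 0 ≤ u) (hu1 : u < p)
    (ε₁ ε₂ : ℝ) (hε₁ : |ε₁| ≤ 2 ^ (1 - (β : ℤ))) (hε₂ : |ε₂| ≤ 2 ^ (1 - (β : ℤ)))
    (x : ℝ) (hx : x = ((r : ℝ) / (p : ℝ)) * (1 + ε₁) * (1 + ε₂)) :
    (k : ℝ) - 1 < x ∧ k - 1 ≤ ⌊x⌋ :=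
  fdiv_lower_bound_general β hβ r p k u hr0 hr1 hp0 hru hu0 ε₁ ε₂ hε₁ hε₂ x hx
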